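/- arXiv:2102.03737 — 2 statements merged into one kernel-verified Lean document; each statement's English description precedes it below -/
import Mathlib

section
/- (Tsujii's criterion.) Let ν be a Borel probability measure on [0,1] which is absolutely continuous with respect to Lebesgue measure with density bounded between two positive constants, let x↦μ_x be a measurable family of Borel probability measures on ℝ, and let μ be the Borel probability measure on [0,1]×ℝ defined by μ(A)=∫₀¹∫_ℝ 1_A(x,z) dμ_x(z) dν(x). For r>0 set ‖μ_x‖_r² = ∫_ℝ (μ_x((z−r,z+r)))² dz and I(r) = r⁻² ∫₀¹ ‖μ_x‖_r² dx, the x-integral being with respect to Lebesgue measure. If liminf_{r→0} I(r) < ∞, then μ is absolutely continuous with respect to the two-dimensional Lebesgue measure on [0,1]×ℝ and its density is square-integrable. -/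
open MeasureTheory Set Filter Topology
open scoped ENNReal
open Metric

noncomputable section


lemma my_cauchy_schwarz {α : Type*} [MeasurableSpace α] (μ : Measure α)
    (f g : α → ℝ≥0∞) (hf : AEMeasurable f μ) (hg : AEMeasurable g μ) :
    (∫⁻ a, f a * g a ∂μ) ^ 2 ≤ (∫⁻ a, (f a) ^ 2 ∂μ) * (∫⁻ a, (g a) ^ 2 ∂μ) := by
  have hpq : (2:ℝ).HolderConjugate 2 := Real.HolderConjugate.two_two
  have h := ENNReal.lintegral_mul_le_Lp_mul_Lq μ hpq hf hg
  have h2 : ∀ x : ℝ≥0∞, x ^ (2:ℝ) = x ^ (2:ℕ) := fun x => by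
    rw [← ENNReal.rpow_natCast]; norm_num
  calc (∫⁻ a, f a * g a ∂μ) ^ 2
      ≤ ((∫⁻ a, f a ^ (2:ℝ) ∂μ) ^ (1/(2:ℝ)) * (∫⁻ a, g a ^ (2:ℝ) ∂μ) ^ (1/(2:ℝ))) ^ 2 := by
        exact pow_le_pow_left' (h.trans_eq rfl) 2
    _ = (∫⁻ a, (f a) ^ 2 ∂μ) * (∫⁻ a, (g a) ^ 2 ∂μ) := by
        rw [mul_pow, ← ENNReal.rpow_natCast ((∫⁻ a, f a ^ (2:ℝ) ∂μ) ^ (1/(2:ℝ))),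
          ← ENNReal.rpow_natCast ((∫⁻ a, g a ^ (2:ℝ) ∂μ) ^ (1/(2:ℝ))),
          ← ENNReal.rpow_mul, ← ENNReal.rpow_mul]
        norm_num [h2]

lemma my_joint_meas (μx : ℝ → Measure ℝ) (hprob : ∀ x, IsProbabilityMeasure (μx x))
    (hmeas : ∀ s : Set ℝ, MeasurableSet s → Measurable fun x => μx x s) (s : ℝ) :
    Measurable (fun q : ℝ × ℝ => μx q.1 (Ioo (q.2 - s) (q.2 + s))) := by
  have hk : Measurable μx := Measure.measurable_of_measurable_coe _ hmeas
  let κ : ProbabilityTheory.Kernel (ℝ × ℝ) ℝ :=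
    ⟨fun q => μx q.1, hk.comp measurable_fst⟩
  have : ProbabilityTheory.IsMarkovKernel κ := ⟨fun q => hprob q.1⟩
  have hT : MeasurableSet {q : (ℝ × ℝ) × ℝ | q.1.2 - s < q.2 ∧ q.2 < q.1.2 + s} := by
    apply MeasurableSet.inter
    · exact measurableSet_lt ((measurable_snd.comp measurable_fst).sub measurable_const)
        measurable_snd
    · exact measurableSet_lt measurable_snd
        ((measurable_snd.comp measurable_fst).add measurable_const)
  have h := ProbabilityTheory.Kernel.measurable_kernel_prodMk_left (κ := κ) hT
  have : ∀ q : ℝ × ℝ, (Prod.mk q ⁻¹' {q : (ℝ × ℝ) × ℝ | q.1.2 - s < q.2 ∧ q.2 < q.1.2 + s})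
      = Ioo (q.2 - s) (q.2 + s) := by
    intro q; ext w; simp [Ioo]
  simpa [κ, this] using h

lemma my_vol_cb (p : ℝ × ℝ) (t : ℝ) :
    volume (closedBall p t) = ENNReal.ofReal (2 * t) ^ 2 := by
  have : closedBall p t = closedBall p.1 t ×ˢ closedBall p.2 t := by
    rw [closedBall_prod_same]
  rw [this, Measure.volume_eq_prod ℝ ℝ, Measure.prod_prod, Real.volume_closedBall, Real.volume_closedBall, sq]

lemma my_meas_cb (μ : Measure (ℝ × ℝ)) [SFinite μ] (t : ℝ) :
    Measurable fun p : ℝ × ℝ => μ (closedBall p t) := by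
  have hS : MeasurableSet {q : (ℝ × ℝ) × (ℝ × ℝ) | dist q.2 q.1 ≤ t} :=
    measurableSet_le (measurable_dist.comp (measurable_snd.prodMk measurable_fst))
      measurable_const
  have h := measurable_measure_prodMk_left (ν := μ) hS
  have he : ∀ p : ℝ × ℝ, (Prod.mk p ⁻¹' {q : (ℝ × ℝ) × (ℝ × ℝ) | dist q.2 q.1 ≤ t})
      = closedBall p t := by
    intro p; ext q; simp [mem_closedBall]
  simpa [he] using h

lemma my_nu_le (ν : Measure ℝ) (f : ℝ → ℝ) (L : ℝ)
    (hν : ν = (volume.restrict (Icc (0:ℝ) 1)).withDensity (fun x => ENNReal.ofReal (f x)))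
    (hbd : ∀ x ∈ Icc (0:ℝ) 1, f x ≤ L) :
    ν ≤ (ENNReal.ofReal L) • (volume.restrict (Icc (0:ℝ) 1)) := by
  rw [hν, Measure.le_iff]
  intro s hs
  rw [withDensity_apply _ hs, Measure.smul_apply, smul_eq_mul,
    Measure.restrict_apply hs, Measure.restrict_restrict hs]
  calc ∫⁻ y in s ∩ Icc (0:ℝ) 1, ENNReal.ofReal (f y)
      ≤ ∫⁻ _ in s ∩ Icc (0:ℝ) 1, ENNReal.ofReal L := by
        refine lintegral_mono_ae ?_
        filter_upwards [ae_restrict_mem (hs.inter measurableSet_Icc)] with y hy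
        exact ENNReal.ofReal_le_ofReal (hbd y hy.2)
    _ = ENNReal.ofReal L * volume (s ∩ Icc 0 1) := by
        simp [lintegral_const, Measure.restrict_apply]

lemma my_rect (μx : ℝ → Measure ℝ) (ν : Measure ℝ) (μ : Measure (ℝ × ℝ))
    (hdisint : ∀ A : Set (ℝ × ℝ), MeasurableSet A →
      μ A = ∫⁻ x, μx x {z : ℝ | (x, z) ∈ A} ∂ν)
    (s t : Set ℝ) (hs : MeasurableSet s) (ht : MeasurableSet t) :
    μ (s ×ˢ t) = ∫⁻ y, s.indicator (fun y => μx y t) y ∂ν := by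
  rw [hdisint _ (hs.prod ht)]
  refine lintegral_congr fun y => ?_
  by_cases hy : y ∈ s
  · simp [Set.indicator_of_mem hy, Set.mem_prod, hy]
  · simp [Set.indicator_of_notMem hy, Set.mem_prod, hy]

lemma my_pointwise (μx : ℝ → Measure ℝ) (ν : Measure ℝ) (μ : Measure (ℝ × ℝ))
    (f : ℝ → ℝ) (L : ℝ)
    (hν : ν = (volume.restrict (Icc (0:ℝ) 1)).withDensity (fun x => ENNReal.ofReal (f x)))
    (hbd : ∀ x ∈ Icc (0:ℝ) 1, f x ≤ L)
    (hdisint : ∀ A : Set (ℝ × ℝ), MeasurableSet A →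
      μ A = ∫⁻ x, μx x {z : ℝ | (x, z) ∈ A} ∂ν)
    {s : ℝ} (hs : 0 < s) (x z : ℝ) :
    μ (closedBall (x, z) (s/2)) ≤ ENNReal.ofReal L *
      ∫⁻ y in Icc (0:ℝ) 1,
        (Icc (x - s/2) (x + s/2)).indicator (fun y => μx y (Ioo (z - s) (z + s))) y ∂volume := by
  have hball : closedBall ((x, z) : ℝ × ℝ) (s/2)
      = Icc (x - s/2) (x + s/2) ×ˢ Icc (z - s/2) (z + s/2) := by
    rw [← closedBall_prod_same, Real.closedBall_eq_Icc, Real.closedBall_eq_Icc]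
  rw [hball, my_rect μx ν μ hdisint _ _ measurableSet_Icc measurableSet_Icc]
  calc ∫⁻ y, (Icc (x - s/2) (x + s/2)).indicator (fun y => μx y (Icc (z - s/2) (z + s/2))) y ∂ν
      ≤ ∫⁻ y, (Icc (x - s/2) (x + s/2)).indicator (fun y => μx y (Ioo (z - s) (z + s))) y
          ∂((ENNReal.ofReal L) • (volume.restrict (Icc (0:ℝ) 1))) := by
        refine lintegral_mono' (my_nu_le ν f L hν hbd) fun y => ?_
        refine Set.indicator_le_indicator ?_
        exact measure_mono (Icc_subset_Ioo (by linarith) (by linarith))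
    _ = ENNReal.ofReal L * ∫⁻ y in Icc (0:ℝ) 1,
          (Icc (x - s/2) (x + s/2)).indicator (fun y => μx y (Ioo (z - s) (z + s))) y ∂volume := by
        rw [lintegral_smul_measure, smul_eq_mul]

lemma my_ind_swap (s : ℝ) (c : ℝ → ℝ≥0∞) (a b : ℝ) :
    (Icc (a - s/2) (a + s/2)).indicator c b
      = (Icc (b - s/2) (b + s/2)).indicator 1 a * c b := by
  have hiff : b ∈ Icc (a - s/2) (a + s/2) ↔ a ∈ Icc (b - s/2) (b + s/2) := by
    simp only [mem_Icc]; constructor <;> rintro ⟨h1, h2⟩ <;> exact ⟨by linarith, by linarith⟩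
  by_cases hb : b ∈ Icc (a - s/2) (a + s/2)
  · simp [Set.indicator_of_mem hb, Set.indicator_of_mem (hiff.mp hb)]
  · simp [Set.indicator_of_notMem hb, Set.indicator_of_notMem (mt hiff.mpr hb)]

lemma my_sq_bound (μx : ℝ → Measure ℝ) (ν : Measure ℝ) (μ : Measure (ℝ × ℝ))
    (f : ℝ → ℝ) (L : ℝ)
    (hν : ν = (volume.restrict (Icc (0:ℝ) 1)).withDensity (fun x => ENNReal.ofReal (f x)))
    (hbd : ∀ x ∈ Icc (0:ℝ) 1, f x ≤ L)
    (hprob : ∀ x, IsProbabilityMeasure (μx x))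
    (hmeas : ∀ s : Set ℝ, MeasurableSet s → Measurable fun x => μx x s)
    (hdisint : ∀ A : Set (ℝ × ℝ), MeasurableSet A →
      μ A = ∫⁻ x, μx x {z : ℝ | (x, z) ∈ A} ∂ν)
    {s : ℝ} (hs : 0 < s) :
    ∫⁻ p : ℝ × ℝ, μ (closedBall p (s/2)) ^ 2 ∂volume ≤
      ENNReal.ofReal L ^ 2 * ENNReal.ofReal s ^ 2 *
        ∫⁻ x in Icc (0:ℝ) 1, ∫⁻ z : ℝ, (μx x (Ioo (z - s) (z + s))) ^ 2 ∂volume ∂volume := by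
  set h : ℝ → ℝ → ℝ≥0∞ := fun y z => μx y (Ioo (z - s) (z + s)) with hh
  have hjm : Measurable (fun q : ℝ × ℝ => h q.1 q.2) := my_joint_meas μx hprob hmeas s
  -- Cauchy-Schwarz step for fixed (x, z)
  have step1 : ∀ x z : ℝ,
      (∫⁻ y in Icc (0:ℝ) 1, (Icc (x - s/2) (x + s/2)).indicator (fun y => h y z) y ∂volume) ^ 2
      ≤ ENNReal.ofReal s *
        ∫⁻ y in Icc (0:ℝ) 1, (Icc (x - s/2) (x + s/2)).indicator (fun y => (h y z) ^ 2) y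
          ∂volume := by
    intro x z
    set E := Icc (x - s/2) (x + s/2) with hE
    have hfg : ∀ y, (E.indicator 1 y) * (E.indicator (fun y => h y z) y)
        = E.indicator (fun y => h y z) y := by
      intro y; by_cases hy : y ∈ E <;>
        simp [Set.indicator_of_mem, Set.indicator_of_notMem, hy]
    have hcs := my_cauchy_schwarz (volume.restrict (Icc (0:ℝ) 1))
      (E.indicator 1) (E.indicator (fun y => h y z))
      ((measurable_const.indicator measurableSet_Icc).aemeasurable)
      (((hmeas _ measurableSet_Ioo).indicator measurableSet_Icc).aemeasurable)
    simp_rw [hfg] at hcs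
    refine hcs.trans (mul_le_mul ?_ ?_ zero_le zero_le)
    · calc ∫⁻ y in Icc (0:ℝ) 1, (E.indicator 1 y) ^ 2 ∂volume
          ≤ ∫⁻ y, (E.indicator 1 y) ^ 2 ∂volume := setLIntegral_le_lintegral _ _
        _ = ∫⁻ y, E.indicator 1 y ∂volume := by
            refine lintegral_congr fun y => ?_
            by_cases hy : y ∈ E <;>
              simp [Set.indicator_of_mem, Set.indicator_of_notMem, hy]
        _ = volume E := lintegral_indicator_one measurableSet_Icc
        _ = ENNReal.ofReal s := by
            rw [hE, Real.volume_Icc]; congr 1; ring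
    · refine lintegral_mono fun y => ?_
      by_cases hy : y ∈ E <;>
        simp [Set.indicator_of_mem, Set.indicator_of_notMem, hy]
  -- pointwise bound squared
  set W : ℝ × ℝ → ℝ≥0∞ := fun p =>
    ∫⁻ y in Icc (0:ℝ) 1,
      (Icc (p.1 - s/2) (p.1 + s/2)).indicator (fun y => (h y p.2) ^ 2) y ∂volume with hW
  have step2 : ∀ p : ℝ × ℝ, μ (closedBall p (s/2)) ^ 2
      ≤ ENNReal.ofReal L ^ 2 * (ENNReal.ofReal s * W p) := by
    rintro ⟨x, z⟩
    have h1 := my_pointwise μx ν μ f L hν hbd hdisint hs x z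
    calc μ (closedBall ((x, z) : ℝ × ℝ) (s/2)) ^ 2
        ≤ (ENNReal.ofReal L *
            ∫⁻ y in Icc (0:ℝ) 1,
              (Icc (x - s/2) (x + s/2)).indicator (fun y => h y z) y ∂volume) ^ 2 :=
          pow_le_pow_left' h1 2
      _ = ENNReal.ofReal L ^ 2 *
            (∫⁻ y in Icc (0:ℝ) 1,
              (Icc (x - s/2) (x + s/2)).indicator (fun y => h y z) y ∂volume) ^ 2 := by
          rw [mul_pow]
      _ ≤ ENNReal.ofReal L ^ 2 * (ENNReal.ofReal s * W (x, z)) := by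
          exact mul_le_mul_right (step1 x z) _
  -- measurability of the inner double function
  set G : (ℝ × ℝ) → ℝ → ℝ≥0∞ := fun p y =>
    (Icc (y - s/2) (y + s/2)).indicator 1 p.1 * (h y p.2) ^ 2 with hG
  have hGm : Measurable (Function.uncurry G) := by
    apply Measurable.mul
    · have hSm : MeasurableSet {q : (ℝ × ℝ) × ℝ | q.2 - s/2 ≤ q.1.1 ∧ q.1.1 ≤ q.2 + s/2} := by
        apply MeasurableSet.inter
        · exact measurableSet_le (measurable_snd.sub measurable_const)
            (measurable_fst.comp measurable_fst)
        · exact measurableSet_le (measurable_fst.comp measurable_fst)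
            (measurable_snd.add measurable_const)
      have : (fun q : (ℝ × ℝ) × ℝ => (Icc (q.2 - s/2) (q.2 + s/2)).indicator 1 q.1.1)
          = {q : (ℝ × ℝ) × ℝ | q.2 - s/2 ≤ q.1.1 ∧ q.1.1 ≤ q.2 + s/2}.indicator
              (fun _ => (1 : ℝ≥0∞)) := by
        ext q
        by_cases hq : q.1.1 ∈ Icc (q.2 - s/2) (q.2 + s/2)
        · rw [Set.indicator_of_mem hq, Set.indicator_of_mem (by exact mem_Icc.mp hq)]; rfl
        · rw [Set.indicator_of_notMem hq,
            Set.indicator_of_notMem (by exact fun h' => hq (mem_Icc.mpr h'))]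
      exact this ▸ (measurable_const.indicator hSm)
    · exact ((hjm.comp ((measurable_snd.prodMk
        (measurable_snd.comp measurable_fst)) : Measurable
          fun q : (ℝ × ℝ) × ℝ => (q.2, q.1.2)))).pow_const 2
  have hWG : ∀ p, W p = ∫⁻ y in Icc (0:ℝ) 1, G p y ∂volume := by
    intro p
    refine lintegral_congr fun y => ?_
    exact my_ind_swap s (fun y => (h y p.2) ^ 2) p.1 y
  have hWm : Measurable W := by
    rw [funext hWG]
    exact hGm.lintegral_prod_right
  -- the triple integral computation
  have step3 : ∫⁻ p : ℝ × ℝ, W p ∂volume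
      = ENNReal.ofReal s *
        ∫⁻ x in Icc (0:ℝ) 1, ∫⁻ z : ℝ, (μx x (Ioo (z - s) (z + s))) ^ 2 ∂volume ∂volume := by
    calc ∫⁻ p : ℝ × ℝ, W p ∂volume
        = ∫⁻ p : ℝ × ℝ, ∫⁻ y in Icc (0:ℝ) 1, G p y ∂volume ∂volume :=
          lintegral_congr hWG
      _ = ∫⁻ y in Icc (0:ℝ) 1, ∫⁻ p : ℝ × ℝ, G p y ∂volume ∂volume :=
          lintegral_lintegral_swap hGm.aemeasurable
      _ = ∫⁻ y in Icc (0:ℝ) 1, ENNReal.ofReal s * ∫⁻ z : ℝ, (h y z) ^ 2 ∂volume ∂volume := by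
          refine lintegral_congr fun y => ?_
          calc ∫⁻ p : ℝ × ℝ, G p y ∂volume
              = ∫⁻ p : ℝ × ℝ, (Icc (y - s/2) (y + s/2)).indicator 1 p.1 * (h y p.2) ^ 2
                  ∂((volume : Measure ℝ).prod (volume : Measure ℝ)) := by
                rw [← Measure.volume_eq_prod]
            _ = (∫⁻ a : ℝ, (Icc (y - s/2) (y + s/2)).indicator 1 a ∂volume)
                  * ∫⁻ z : ℝ, (h y z) ^ 2 ∂volume := by
                refine lintegral_prod_mul (f := fun a : ℝ => (Icc (y - s/2) (y + s/2)).indicator 1 a)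
                  (g := fun z : ℝ => (h y z) ^ 2) ?_ ?_
                · exact (measurable_const.indicator measurableSet_Icc).aemeasurable
                · exact ((hjm.comp (measurable_const.prodMk measurable_id)).pow_const
                    2).aemeasurable
            _ = ENNReal.ofReal s * ∫⁻ z : ℝ, (h y z) ^ 2 ∂volume := by
                rw [lintegral_indicator_one measurableSet_Icc, Real.volume_Icc]
                have : y + s/2 - (y - s/2) = s := by ring
                rw [this]
      _ = ENNReal.ofReal s *
            ∫⁻ x in Icc (0:ℝ) 1, ∫⁻ z : ℝ, (μx x (Ioo (z - s) (z + s))) ^ 2 ∂volume ∂volume := by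
          rw [lintegral_const_mul'' _ ?_]
          exact ((hjm.pow_const 2).lintegral_prod_right).aemeasurable
  calc ∫⁻ p : ℝ × ℝ, μ (closedBall p (s/2)) ^ 2 ∂volume
      ≤ ∫⁻ p : ℝ × ℝ, ENNReal.ofReal L ^ 2 * (ENNReal.ofReal s * W p) ∂volume :=
        lintegral_mono step2
    _ = ENNReal.ofReal L ^ 2 * ENNReal.ofReal s * ∫⁻ p : ℝ × ℝ, W p ∂volume := by
        simp_rw [← mul_assoc]
        rw [lintegral_const_mul'' _ hWm.aemeasurable]
    _ = ENNReal.ofReal L ^ 2 * ENNReal.ofReal s ^ 2 *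
          ∫⁻ x in Icc (0:ℝ) 1, ∫⁻ z : ℝ, (μx x (Ioo (z - s) (z + s))) ^ 2 ∂volume ∂volume := by
        rw [step3]; ring

lemma my_thick (μ : Measure (ℝ × ℝ)) [IsProbabilityMeasure μ] (K : Set (ℝ × ℝ))
    (hK : IsClosed K) {s : ℝ} (hs : 0 < s) :
    ENNReal.ofReal s ^ 2 * μ K
      ≤ ∫⁻ p in cthickening (s/2) K, μ (closedBall p (s/2)) ∂volume := by
  set t := s/2 with ht
  set S : Set ((ℝ × ℝ) × (ℝ × ℝ)) := {q | q.2 ∈ K ∧ dist q.2 q.1 ≤ t} with hS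
  have hSm : MeasurableSet S := by
    refine MeasurableSet.inter (measurable_snd hK.measurableSet) ?_
    exact measurableSet_le (measurable_dist.comp (measurable_snd.prodMk measurable_fst))
      measurable_const
  have hpre : ∀ p : ℝ × ℝ, Prod.mk p ⁻¹' S = closedBall p t ∩ K := by
    intro p; ext q; simp [hS, mem_closedBall, and_comm]
  have h2t : 2 * t = s := by rw [ht]; ring
  calc ENNReal.ofReal s ^ 2 * μ K
      = ∫⁻ q, K.indicator (fun _ => ENNReal.ofReal s ^ 2) q ∂μ := by
        rw [lintegral_indicator_const hK.measurableSet]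
    _ = ∫⁻ q, ∫⁻ p : ℝ × ℝ, S.indicator (fun _ => (1:ℝ≥0∞)) (p, q) ∂volume ∂μ := by
        refine lintegral_congr fun q => ?_
        by_cases hq : q ∈ K
        · have heq : ∀ p : ℝ × ℝ, S.indicator (fun _ => (1:ℝ≥0∞)) (p, q)
              = (closedBall q t).indicator (fun _ => (1:ℝ≥0∞)) p := by
            intro p
            by_cases hp : p ∈ closedBall q t
            · rw [Set.indicator_of_mem hp, Set.indicator_of_mem
                (show (p, q) ∈ S from ⟨hq, by rw [dist_comm]; exact mem_closedBall.mp hp⟩)]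
            · rw [Set.indicator_of_notMem hp, Set.indicator_of_notMem
                (fun hmem => hp (mem_closedBall.mpr (by rw [dist_comm]; exact hmem.2)))]
          simp_rw [heq]
          rw [lintegral_indicator_const (measurableSet_closedBall), one_mul, my_vol_cb, h2t,
            Set.indicator_of_mem hq]
        · have heq : ∀ p : ℝ × ℝ, S.indicator (fun _ => (1:ℝ≥0∞)) (p, q) = 0 := by
            intro p
            exact Set.indicator_of_notMem (fun hmem => hq hmem.1) _
          simp_rw [heq]
          rw [Set.indicator_of_notMem hq]
          simp
    _ = ∫⁻ p : ℝ × ℝ, ∫⁻ q, S.indicator (fun _ => (1:ℝ≥0∞)) (p, q) ∂μ ∂volume := by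
        exact lintegral_lintegral_swap
          (((measurable_const.indicator hSm).comp measurable_swap).aemeasurable)
    _ = ∫⁻ p : ℝ × ℝ, μ (closedBall p t ∩ K) ∂volume := by
        refine lintegral_congr fun p => ?_
        have heq : ∀ q, S.indicator (fun _ => (1:ℝ≥0∞)) (p, q)
            = (Prod.mk p ⁻¹' S).indicator (fun _ => (1:ℝ≥0∞)) q := by
          intro q
          rfl
        simp_rw [heq]
        rw [lintegral_indicator_const (hSm.preimage measurable_prodMk_left), one_mul, hpre]
    _ = ∫⁻ p : ℝ × ℝ, (cthickening t K).indicator (fun p => μ (closedBall p t ∩ K)) p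
          ∂volume := by
        refine lintegral_congr fun p => ?_
        by_cases hp : p ∈ cthickening t K
        · rw [Set.indicator_of_mem hp]
        · rw [Set.indicator_of_notMem hp]
          have hempty : closedBall p t ∩ K = ∅ := by
            ext q
            simp only [mem_inter_iff, mem_empty_iff_false, iff_false, not_and]
            intro hq hqK
            exact hp (mem_cthickening_of_dist_le p q t K hqK
              (by rw [dist_comm]; exact mem_closedBall.mp hq))
          rw [hempty, measure_empty]
    _ = ∫⁻ p in cthickening t K, μ (closedBall p t ∩ K) ∂volume := by
        rw [lintegral_indicator isClosed_cthickening.measurableSet]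
    _ ≤ ∫⁻ p in cthickening t K, μ (closedBall p t) ∂volume :=
        lintegral_mono fun p => measure_mono inter_subset_left


set_option maxHeartbeats 1000000 in
/-- **Tsujii's criterion.** Let `ν` be a probability measure on `[0,1]` with density
bounded between two positive constants, `x ↦ μ_x` a measurable family of probability
measures on `ℝ`, and `μ` the measure on `[0,1] × ℝ` with `μ(A) = ∫∫ 1_A(x,z) dμ_x(z) dν(x)`.
If `liminf_{r→0} I(r) < ∞`, where
`I(r) = r⁻² ∫₀¹ ∫_ℝ (μ_x((z-r,z+r)))² dz dx`, then `μ` is absolutely continuous with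
respect to the two-dimensional Lebesgue measure, with square-integrable density. -/
theorem tsujii_criterion
    (ν : Measure ℝ) [IsProbabilityMeasure ν]
    (f : ℝ → ℝ) (l L : ℝ) (hl : 0 < l) (hL : 0 < L)
    (hν : ν = (volume.restrict (Icc (0:ℝ) 1)).withDensity (fun x => ENNReal.ofReal (f x)))
    (hbd : ∀ x ∈ Icc (0:ℝ) 1, l ≤ f x ∧ f x ≤ L)
    (μx : ℝ → Measure ℝ) (hprob : ∀ x, IsProbabilityMeasure (μx x))
    (hmeas : ∀ s : Set ℝ, MeasurableSet s → Measurable fun x => μx x s)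
    (μ : Measure (ℝ × ℝ)) [IsProbabilityMeasure μ]
    (hdisint : ∀ A : Set (ℝ × ℝ), MeasurableSet A →
      μ A = ∫⁻ x, μx x {z : ℝ | (x, z) ∈ A} ∂ν)
    (hI : liminf
        (fun r : ℝ => (ENNReal.ofReal r)⁻¹ ^ 2 *
          ∫⁻ x in Icc (0:ℝ) 1, ∫⁻ z : ℝ, (μx x (Ioo (z - r) (z + r))) ^ 2 ∂volume ∂volume)
        (𝓝[>] (0:ℝ)) < ⊤) :
    μ ≪ volume ∧ ∫⁻ p : ℝ × ℝ, (μ.rnDeriv volume p) ^ 2 ∂volume < ⊤ := by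

  classical
  set J : ℝ → ℝ≥0∞ := fun r =>
    ∫⁻ x in Icc (0:ℝ) 1, ∫⁻ z : ℝ, (μx x (Ioo (z - r) (z + r))) ^ 2 ∂volume ∂volume with hJdef
  set F : ℝ → ℝ≥0∞ := fun r => (ENNReal.ofReal r)⁻¹ ^ 2 * J r with hFdef
  have hIF : liminf F (𝓝[>] (0:ℝ)) < ⊤ := hI
  set C : ℝ≥0∞ := liminf F (𝓝[>] (0:ℝ)) + 1 with hCdef
  have hCne : C ≠ ⊤ := ENNReal.add_ne_top.mpr ⟨hIF.ne, ENNReal.one_ne_top⟩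
  have hCt : liminf F (𝓝[>] (0:ℝ)) < C := ENNReal.lt_add_right hIF.ne one_ne_zero
  have hfreq : ∃ᶠ r in 𝓝[>] (0:ℝ), F r < C ∧ 0 < r := by
    refine (frequently_lt_of_liminf_lt (by isBoundedDefault) hCt).and_eventually ?_
    exact eventually_mem_nhdsWithin
  obtain ⟨sq, hsq_t, hsq_p⟩ := Filter.exists_seq_forall_of_frequently hfreq
  have hs0 : ∀ n, 0 < sq n := fun n => (hsq_p n).2
  have hFC : ∀ n, F (sq n) ≤ C := fun n => (hsq_p n).1.le
  have hst : Tendsto sq atTop (𝓝 0) := hsq_t.mono_right nhdsWithin_le_nhds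
  have hbd' : ∀ x ∈ Icc (0:ℝ) 1, f x ≤ L := fun x hx => (hbd x hx).2
  have hKB : ∀ n, ∫⁻ p : ℝ × ℝ, μ (closedBall p (sq n / 2)) ^ 2 ∂volume
      ≤ ENNReal.ofReal L ^ 2 * ENNReal.ofReal (sq n) ^ 2 * J (sq n) :=
    fun n => my_sq_bound μx ν μ f L hν hbd' hprob hmeas hdisint (hs0 n)
  have hJle : ∀ n, J (sq n) ≤ ENNReal.ofReal (sq n) ^ 2 * C := by
    intro n
    have ha0 : (ENNReal.ofReal (sq n)) ≠ 0 := (ENNReal.ofReal_pos.mpr (hs0 n)).ne'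
    have haT : (ENNReal.ofReal (sq n)) ≠ ⊤ := ENNReal.ofReal_ne_top
    have hJF : ENNReal.ofReal (sq n) ^ 2 * F (sq n) = J (sq n) := by
      rw [hFdef]
      dsimp only
      rw [← mul_assoc, ← mul_pow, ENNReal.mul_inv_cancel ha0 haT, one_pow, one_mul]
    calc J (sq n) = ENNReal.ofReal (sq n) ^ 2 * F (sq n) := hJF.symm
      _ ≤ ENNReal.ofReal (sq n) ^ 2 * C := mul_le_mul_right (hFC n) _
  -- Absolute continuity
  have hcompact : ∀ K : Set (ℝ × ℝ), IsCompact K → volume K = 0 → μ K = 0 := by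
    intro K hK hK0
    have hbound : ∀ n, μ K ^ 2
        ≤ ENNReal.ofReal L ^ 2 * C * volume (cthickening (sq n / 2) K) := by
      intro n
      set a := ENNReal.ofReal (sq n) with hadef
      have ha0 : a ≠ 0 := (ENNReal.ofReal_pos.mpr (hs0 n)).ne'
      have haT : a ≠ ⊤ := ENNReal.ofReal_ne_top
      set Th := cthickening (sq n / 2) K with hThdef
      have h1 : a ^ 2 * μ K ≤ ∫⁻ p in Th, μ (closedBall p (sq n / 2)) ∂volume :=
        my_thick μ K hK.isClosed (hs0 n)
      have h2 : (∫⁻ p in Th, μ (closedBall p (sq n / 2)) ∂volume) ^ 2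
          ≤ (∫⁻ p in Th, μ (closedBall p (sq n / 2)) ^ 2 ∂volume) * volume Th := by
        have hcs := my_cauchy_schwarz (volume.restrict Th)
          (fun p => μ (closedBall p (sq n / 2))) (fun _ => 1)
          (my_meas_cb μ _).aemeasurable aemeasurable_const
        simp only [mul_one, one_pow] at hcs
        calc (∫⁻ p in Th, μ (closedBall p (sq n / 2)) ∂volume) ^ 2
            ≤ (∫⁻ p in Th, μ (closedBall p (sq n / 2)) ^ 2 ∂volume)
              * ∫⁻ _ in Th, (1:ℝ≥0∞) ∂volume := hcs
          _ = (∫⁻ p in Th, μ (closedBall p (sq n / 2)) ^ 2 ∂volume) * volume Th := by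
              rw [lintegral_one, Measure.restrict_apply_univ]
      have h3 : ∫⁻ p in Th, μ (closedBall p (sq n / 2)) ^ 2 ∂volume
          ≤ ∫⁻ p : ℝ × ℝ, μ (closedBall p (sq n / 2)) ^ 2 ∂volume :=
        setLIntegral_le_lintegral _ _
      have h4 : (a ^ 2) ^ 2 * μ K ^ 2
          ≤ ENNReal.ofReal L ^ 2 * C * ((a ^ 2) ^ 2 * volume Th) := by
        calc (a ^ 2) ^ 2 * μ K ^ 2 = (a ^ 2 * μ K) ^ 2 := by rw [mul_pow]
          _ ≤ (∫⁻ p in Th, μ (closedBall p (sq n / 2)) ∂volume) ^ 2 := pow_le_pow_left' h1 2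
          _ ≤ (∫⁻ p in Th, μ (closedBall p (sq n / 2)) ^ 2 ∂volume) * volume Th := h2
          _ ≤ (ENNReal.ofReal L ^ 2 * a ^ 2 * J (sq n)) * volume Th :=
              mul_le_mul' ((h3.trans (hKB n))) le_rfl
          _ ≤ (ENNReal.ofReal L ^ 2 * a ^ 2 * (a ^ 2 * C)) * volume Th :=
              mul_le_mul' (mul_le_mul_right (hJle n) _) le_rfl
          _ = ENNReal.ofReal L ^ 2 * C * ((a ^ 2) ^ 2 * volume Th) := by ring
      have hcancel : μ K ^ 2 ≤ ENNReal.ofReal L ^ 2 * C * volume Th := by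
        have hb0 : (a ^ 2) ^ 2 ≠ 0 := pow_ne_zero _ (pow_ne_zero _ ha0)
        have hbT : (a ^ 2) ^ 2 ≠ ⊤ := by
          exact ENNReal.pow_ne_top (ENNReal.pow_ne_top haT)
        rw [show ENNReal.ofReal L ^ 2 * C * ((a ^ 2) ^ 2 * volume Th)
            = (a ^ 2) ^ 2 * (ENNReal.ofReal L ^ 2 * C * volume Th) by ring] at h4
        exact (ENNReal.mul_le_mul_iff_right hb0 hbT).mp h4
      exact hcancel
    have htend : Tendsto (fun n => ENNReal.ofReal L ^ 2 * C * volume (cthickening (sq n / 2) K))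
        atTop (𝓝 0) := by
      have h4 : Tendsto (fun n => volume (cthickening (sq n / 2) K)) atTop (𝓝 0) := by
        have hth := tendsto_measure_cthickening (μ := (volume : Measure (ℝ × ℝ))) (s := K)
          ⟨1, one_pos, (hK.cthickening.measure_lt_top).ne⟩
        rw [hK.isClosed.closure_eq, hK0] at hth
        have hhalf : Tendsto (fun n => sq n / 2) atTop (𝓝 0) := by
          have := hst.div_const 2
          simpa using this
        exact hth.comp hhalf
      have h5 : Tendsto (fun n => (ENNReal.ofReal L ^ 2 * C)
          * volume (cthickening (sq n / 2) K)) atTop (𝓝 ((ENNReal.ofReal L ^ 2 * C) * 0)) :=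
        ENNReal.Tendsto.const_mul h4
          (Or.inr (ENNReal.mul_ne_top (ENNReal.pow_ne_top ENNReal.ofReal_ne_top) hCne))
      simpa using h5
    have hμK2 : μ K ^ 2 ≤ 0 := ge_of_tendsto htend (Eventually.of_forall hbound)
    have : μ K ^ 2 = 0 := le_antisymm hμK2 zero_le
    exact pow_eq_zero_iff (by norm_num) |>.mp this
  have hac : μ ≪ volume := by
    refine Measure.AbsolutelyContinuous.mk (fun A hA hA0 => ?_)
    rw [hA.measure_eq_iSup_isCompact μ]
    refine le_antisymm ?_ zero_le
    refine iSup_le fun K => iSup_le fun hKA => iSup_le fun hKc => ?_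
    exact (hcompact K hKc (measure_mono_null hKA hA0)).le
  -- Square integrability
  have hbes := Besicovitch.ae_tendsto_rnDeriv μ (volume : Measure (ℝ × ℝ))
  have httt : Tendsto (fun n => sq n / 2) atTop (𝓝[>] (0:ℝ)) := by
    rw [tendsto_nhdsWithin_iff]
    constructor
    · have := hst.div_const 2
      simpa using this
    · exact Eventually.of_forall fun n => half_pos (hs0 n)
  have key : ∫⁻ p : ℝ × ℝ, (μ.rnDeriv volume p) ^ 2 ∂volume ≤ ENNReal.ofReal L ^ 2 * C := by
    have hle : ∀ᵐ p ∂(volume : Measure (ℝ × ℝ)), (μ.rnDeriv volume p) ^ 2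
        = liminf (fun n =>
          (μ (closedBall p (sq n / 2)) / volume (closedBall p (sq n / 2))) ^ 2) atTop := by
      filter_upwards [hbes] with p hp
      have h1 : Tendsto (fun n => μ (closedBall p (sq n / 2)) / volume (closedBall p (sq n / 2)))
          atTop (𝓝 (μ.rnDeriv volume p)) := hp.comp httt
      have h2 : Tendsto (fun n =>
          (μ (closedBall p (sq n / 2)) / volume (closedBall p (sq n / 2))) ^ 2)
          atTop (𝓝 ((μ.rnDeriv volume p) ^ 2)) :=
        ((ENNReal.continuous_pow 2).tendsto _).comp h1
      exact h2.liminf_eq.symm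
    calc ∫⁻ p : ℝ × ℝ, (μ.rnDeriv volume p) ^ 2 ∂volume
        = ∫⁻ p : ℝ × ℝ, liminf (fun n =>
            (μ (closedBall p (sq n / 2)) / volume (closedBall p (sq n / 2))) ^ 2) atTop
            ∂volume := lintegral_congr_ae hle
      _ ≤ liminf (fun n => ∫⁻ p : ℝ × ℝ,
            (μ (closedBall p (sq n / 2)) / volume (closedBall p (sq n / 2))) ^ 2 ∂volume)
            atTop :=
          lintegral_liminf_le
            (f := fun n (p : ℝ × ℝ) =>
              (μ (closedBall p (sq n / 2)) / volume (closedBall p (sq n / 2))) ^ 2)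
            fun n => ((my_meas_cb μ _).div (my_meas_cb volume _)).pow_const 2
      _ ≤ ENNReal.ofReal L ^ 2 * C := by
          refine liminf_le_of_frequently_le' (Frequently.of_forall fun n => ?_)
          set a := ENNReal.ofReal (sq n) with hadef
          have ha0 : a ≠ 0 := (ENNReal.ofReal_pos.mpr (hs0 n)).ne'
          have haT : a ≠ ⊤ := ENNReal.ofReal_ne_top
          have hvol : ∀ p : ℝ × ℝ, volume (closedBall p (sq n / 2)) = a ^ 2 := by
            intro p
            rw [my_vol_cb]
            congr 2
            ring
          calc ∫⁻ p : ℝ × ℝ,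
                (μ (closedBall p (sq n / 2)) / volume (closedBall p (sq n / 2))) ^ 2 ∂volume
              = ∫⁻ p : ℝ × ℝ, μ (closedBall p (sq n / 2)) ^ 2 * ((a ^ 2)⁻¹) ^ 2 ∂volume := by
                refine lintegral_congr fun p => ?_
                rw [hvol p, div_eq_mul_inv, mul_pow]
            _ = (∫⁻ p : ℝ × ℝ, μ (closedBall p (sq n / 2)) ^ 2 ∂volume) * ((a ^ 2)⁻¹) ^ 2 :=
                lintegral_mul_const'' _ (((my_meas_cb μ _).pow_const 2).aemeasurable)
            _ ≤ (ENNReal.ofReal L ^ 2 * a ^ 2 * (a ^ 2 * C)) * ((a ^ 2)⁻¹) ^ 2 := by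
                refine mul_le_mul' ((hKB n).trans (mul_le_mul_right (hJle n) _)) le_rfl
            _ = ENNReal.ofReal L ^ 2 * C * ((a ^ 2) ^ 2 * ((a ^ 2)⁻¹) ^ 2) := by ring
            _ = ENNReal.ofReal L ^ 2 * C := by
                rw [← mul_pow, ENNReal.mul_inv_cancel (pow_ne_zero _ ha0)
                  (ENNReal.pow_ne_top haT), one_pow, mul_one]
  refine ⟨hac, lt_of_le_of_lt key ?_⟩
  exact ENNReal.mul_lt_top (ENNReal.pow_lt_top ENNReal.ofReal_lt_top) (hCne.lt_top)
end
end

section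
/- Let 0<α<1, K₀>1, and let M=(M_{jk}) be an invertible 2×2 real matrix such that, with C_α^u={(v₁,v₂):|v₂|≤α|v₁|}, C_α^s={(v₁,v₂):|v₁|≤α|v₂|} and the max norm |v|=max(|v₁|,|v₂|): M(C_α^u)⊆C_α^u, |Mv|≥K₀|v| for all v∈C_α^u, M⁻¹(C_α^s)⊆C_α^s, and |M⁻¹v|≥K₀|v| for all v∈C_α^s. Then: |M₁₂| ≤ α|M₁₁|, |M₂₁| ≤ α|M₁₁|, |M₂₂| ≤ (1/K₀² + α²)|M₁₁|, and |M₁₁| ≥ K₀. -/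
open Set

/-- Pointwise linear-algebra form of the hyperbolicity estimates for the derivative of a
generalized horseshoe map: an invertible `2×2` matrix preserving the unstable cone and
expanding on it, whose inverse preserves the stable cone and expands on it (all in the max
norm), satisfies `|M₁₂| ≤ α|M₁₁|`, `|M₂₁| ≤ α|M₁₁|`, `|M₂₂| ≤ (1/K₀² + α²)|M₁₁|` and
`|M₁₁| ≥ K₀`. -/
theorem cone_hyperbolicity_matrix_estimates
    (α K₀ : ℝ) (hα0 : 0 < α) (hα1 : α < 1) (hK₀ : 1 < K₀)
    (m11 m12 m21 m22 : ℝ) (hdet : m11 * m22 - m12 * m21 ≠ 0)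
    (hUinv : ∀ v : ℝ × ℝ, |v.2| ≤ α * |v.1| →
      |m21 * v.1 + m22 * v.2| ≤ α * |m11 * v.1 + m12 * v.2|)
    (hUexp : ∀ v : ℝ × ℝ, |v.2| ≤ α * |v.1| →
      K₀ * max |v.1| |v.2| ≤ max |m11 * v.1 + m12 * v.2| |m21 * v.1 + m22 * v.2|)
    (hSinv : ∀ v : ℝ × ℝ, |m11 * v.1 + m12 * v.2| ≤ α * |m21 * v.1 + m22 * v.2| →
      |v.1| ≤ α * |v.2|)
    (hSexp : ∀ v : ℝ × ℝ, |m11 * v.1 + m12 * v.2| ≤ α * |m21 * v.1 + m22 * v.2| →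
      K₀ * max |m11 * v.1 + m12 * v.2| |m21 * v.1 + m22 * v.2| ≤ max |v.1| |v.2|) :
    |m12| ≤ α * |m11| ∧ |m21| ≤ α * |m11| ∧
      |m22| ≤ (1 / K₀ ^ 2 + α ^ 2) * |m11| ∧ K₀ ≤ |m11| := by
  set d := m11 * m22 - m12 * m21 with hd
  -- apply unstable hypotheses to (1,0)
  have h21 : |m21| ≤ α * |m11| := by
    have := hUinv (1, 0) (by simpa using hα0.le)
    simpa using this
  have h11K : K₀ ≤ |m11| := by
    have h := hUexp (1, 0) (by simpa using hα0.le)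
    simp only [mul_one, mul_zero, add_zero, abs_one, abs_zero] at h
    have hmax : max |m11| |m21| = |m11| :=
      max_eq_left (h21.trans (by nlinarith [abs_nonneg m11]))
    simpa [hmax] using h
  -- apply stable hypotheses to (-m12, m11), whose image is (0, d)
  have hzero : m11 * (-m12) + m12 * m11 = 0 := by ring
  have himg : m21 * (-m12) + m22 * m11 = d := by rw [hd]; ring
  have hcond : |m11 * (-m12, m11).1 + m12 * (-m12, m11).2| ≤
      α * |m21 * (-m12, m11).1 + m22 * (-m12, m11).2| := by
    simp only [hzero, himg, abs_zero]
    positivity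
  have h12 : |m12| ≤ α * |m11| := by
    have := hSinv (-m12, m11) hcond
    simpa using this
  have hKd : K₀ * |d| ≤ |m11| := by
    have h := hSexp (-m12, m11) hcond
    simp only [hzero, himg, abs_zero, abs_neg] at h
    have hmax1 : max (0 : ℝ) |d| = |d| := max_eq_right (abs_nonneg d)
    have hmax2 : max |m12| |m11| = |m11| :=
      max_eq_right (h12.trans (by nlinarith [abs_nonneg m11]))
    rw [hmax1, hmax2] at h
    exact h
  have hK0 : (0:ℝ) < K₀ := by linarith
  have h22 : |m22| ≤ (1 / K₀ ^ 2 + α ^ 2) * |m11| := by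
    have h11pos : 0 < |m11| := by linarith
    have hmd : m11 * m22 = d + m12 * m21 := by rw [hd]; ring
    have habs : |m11| * |m22| = |m11 * m22| := (abs_mul m11 m22).symm
    have h1 : |m11 * m22| ≤ |d| + |m12| * |m21| := by
      rw [hmd]
      calc |d + m12 * m21| ≤ |d| + |m12 * m21| := abs_add_le _ _
        _ = |d| + |m12| * |m21| := by rw [abs_mul]
    have h2 : |d| ≤ |m11| / K₀ := by
      rw [le_div_iff₀ hK0]; nlinarith
    have h3 : |m11| / K₀ ≤ |m11| ^ 2 / K₀ ^ 2 := by
      rw [div_le_div_iff₀ hK0 (by positivity)]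
      nlinarith [mul_nonneg (mul_nonneg (abs_nonneg m11) hK0.le) (sub_nonneg.mpr h11K)]
    have h4 : |m12| * |m21| ≤ α ^ 2 * |m11| ^ 2 := by
      nlinarith [abs_nonneg m12, abs_nonneg m21, abs_nonneg m11]
    have : |m11| * |m22| ≤ (1 / K₀ ^ 2 + α ^ 2) * |m11| * |m11| := by
      rw [habs]
      calc |m11 * m22| ≤ |d| + |m12| * |m21| := h1
        _ ≤ |m11| ^ 2 / K₀ ^ 2 + α ^ 2 * |m11| ^ 2 := by linarith
        _ = (1 / K₀ ^ 2 + α ^ 2) * |m11| * |m11| := by ring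
    nlinarith
  exact ⟨h12, h21, h22, h11K⟩
end
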